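/- Let μ_1, …, μ_K be i.i.d. standard normal random variables and μ_* = max_{1≤k≤K} μ_k. Then for all reals ξ and Δ with ξ ≥ Δ > 0, P( there exists k with 0 < μ_* − μ_k ≤ Δ ) ≤ K·Δ·φ(ξ − Δ) + P( μ_* ≤ ξ ). -/

import Mathlib

open MeasureTheory ProbabilityTheory

/-- The standard normal density. -/
noncomputable def stdNormalPDF (x : ℝ) : ℝ :=
    (Real.sqrt (2 * Real.pi))⁻¹ * Real.exp (-x ^ 2 / 2)

lemma stdNormalPDF_nonneg (x : ℝ) : 0 ≤ stdNormalPDF x := by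
  unfold stdNormalPDF; positivity

lemma gauss_Ico_le (a b c : ℝ) (hc : 0 ≤ c) (hca : c ≤ a) :
    gaussianReal 0 1 (Set.Ico a b) ≤ ENNReal.ofReal (stdNormalPDF c) * ENNReal.ofReal (b - a) := by
  rw [gaussianReal_apply 0 one_ne_zero]
  calc ∫⁻ x in Set.Ico a b, gaussianPDF 0 1 x
      ≤ ∫⁻ _x in Set.Ico a b, ENNReal.ofReal (stdNormalPDF c) := by
        refine setLIntegral_mono measurable_const (fun x hx => ?_)
        rw [gaussianPDF]
        refine ENNReal.ofReal_le_ofReal ?_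
        rw [gaussianPDFReal, stdNormalPDF]
        simp only [NNReal.coe_one, sub_zero, mul_one]
        have hx' : c ≤ x := hca.trans hx.1
        have h2 : -x^2 / 2 ≤ -c^2/2 := by nlinarith
        have := Real.exp_le_exp.mpr h2
        have h3 : (0:ℝ) ≤ (Real.sqrt (2 * Real.pi))⁻¹ := by positivity
        exact mul_le_mul_of_nonneg_left this h3
    _ = ENNReal.ofReal (stdNormalPDF c) * ENNReal.ofReal (b - a) := by
        rw [setLIntegral_const, Real.volume_Ico]

lemma my_sup'_attach {α ι : Type*} [SemilatticeSup α] (s : Finset ι) (h : s.Nonempty)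
    (f : ι → α) :
    s.attach.sup' (Finset.attach_nonempty_iff.mpr h) (fun x => f x.1) = s.sup' h f := by
  apply le_antisymm
  · exact Finset.sup'_le _ _ fun x _ => Finset.le_sup' f x.2
  · exact Finset.sup'_le _ _ fun x hx =>
      Finset.le_sup' (f := fun x : {y // y ∈ s} => f x.1) (Finset.mem_attach _ ⟨x, hx⟩)

theorem stmt_6 {Ω : Type*} [MeasurableSpace Ω] (P : Measure Ω) [IsProbabilityMeasure P]
    (K : ℕ) (hK : K ≠ 0) (X : Fin K → Ω → ℝ) (hmeas : ∀ k, Measurable (X k))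
    (hindep : iIndepFun X P)
    (hdist : ∀ k, Measure.map (X k) P = gaussianReal 0 1)
    (μstar : Ω → ℝ)
    (hμstar : ∀ ω, μstar ω = Finset.univ.sup'
      (Finset.univ_nonempty_iff.mpr ⟨⟨0, Nat.pos_of_ne_zero hK⟩⟩) (fun k => X k ω))
    (ξ Δ : ℝ) (hΔ : 0 < Δ) (hξΔ : Δ ≤ ξ) :
    P {ω | ∃ k, 0 < μstar ω - X k ω ∧ μstar ω - X k ω ≤ Δ}
      ≤ ENNReal.ofReal (K * Δ * stdNormalPDF (ξ - Δ)) + P {ω | μstar ω ≤ ξ} := by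
  have hXle : ∀ k ω, X k ω ≤ μstar ω := fun k ω => by
    rw [hμstar]; exact Finset.le_sup' (fun j => X j ω) (Finset.mem_univ k)
  by_cases hK1 : K = 1
  · -- event is empty
    have hempty : {ω | ∃ k, 0 < μstar ω - X k ω ∧ μstar ω - X k ω ≤ Δ} = ∅ := by
      ext ω
      simp only [Set.mem_setOf_eq, Set.mem_empty_iff_false, iff_false, not_exists]
      intro k ⟨h1, _⟩
      have : μstar ω ≤ X k ω := by
        rw [hμstar]
        refine Finset.sup'_le _ _ fun j _ => ?_
        subst hK1
        have : j = k := Subsingleton.elim j k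
        rw [this]
      linarith
    rw [hempty]
    simp
  -- K ≥ 2 case
  have hK2 : 2 ≤ K := by omega
  haveI : Nontrivial (Fin K) := Fin.nontrivial_iff_two_le.mpr hK2
  have hne : ∀ k : Fin K, (Finset.univ.erase k).Nonempty := fun k => by
    obtain ⟨j, hj⟩ := exists_ne k
    exact ⟨j, Finset.mem_erase.mpr ⟨hj, Finset.mem_univ j⟩⟩
  set M : Fin K → Ω → ℝ := fun k ω => (Finset.univ.erase k).sup' (hne k) (fun j => X j ω) with hM
  have hMmeas : ∀ k, Measurable (M k) := by
    intro k
    have h := Finset.measurable_sup' (hne k) (fun j (_ : j ∈ Finset.univ.erase k) => hmeas j)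
    convert h using 1
    funext ω
    rw [Finset.sup'_apply]
  -- independence of M k and X k
  have hind : ∀ k, IndepFun (M k) (X k) P := by
    intro k
    have h1 := hindep.indepFun_finset (Finset.univ.erase k) {k} (by simp) hmeas
    have h2 := h1.comp
      (φ := fun v : (↥(Finset.univ.erase k) → ℝ) =>
        (Finset.univ.erase k).attach.sup'
          (Finset.attach_nonempty_iff.mpr (hne k)) (fun j => v j))
      (ψ := fun v : (↥({k} : Finset (Fin K)) → ℝ) => v ⟨k, Finset.mem_singleton_self k⟩)
      (by
        have h := Finset.measurable_sup' (Finset.attach_nonempty_iff.mpr (hne k))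
          (fun (j : ↥(Finset.univ.erase k)) (_ : j ∈ (Finset.univ.erase k).attach) =>
            (measurable_pi_apply j : Measurable fun v : (↥(Finset.univ.erase k) → ℝ) => v j))
        convert h using 1
        funext v
        rw [Finset.sup'_apply])
      (measurable_pi_apply _ : Measurable fun v : (↥({k} : Finset (Fin K)) → ℝ) => v ⟨k, Finset.mem_singleton_self k⟩)
    convert h2 using 1
    funext ω
    exact (my_sup'_attach (Finset.univ.erase k) (hne k) (fun j => X j ω)).symm
    rfl
  -- the bad sets
  set S : Set (ℝ × ℝ) := {p | ξ < p.1 ∧ p.1 - Δ ≤ p.2 ∧ p.2 < p.1} with hS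
  have hSmeas : MeasurableSet S := by
    apply MeasurableSet.inter (measurableSet_lt measurable_const measurable_fst)
    exact MeasurableSet.inter
      (measurableSet_le (measurable_fst.sub measurable_const) measurable_snd)
      (measurableSet_lt measurable_snd measurable_fst)
  set A : Fin K → Set Ω := fun k => (fun ω => (M k ω, X k ω)) ⁻¹' S with hA
  -- inclusion
  have hincl : {ω | ∃ k, 0 < μstar ω - X k ω ∧ μstar ω - X k ω ≤ Δ}
      ⊆ (⋃ k, A k) ∪ {ω | μstar ω ≤ ξ} := by
    intro ω hω
    obtain ⟨k, hk1, hk2⟩ := hω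
    by_cases hξ : μstar ω ≤ ξ
    · exact Or.inr hξ
    · left
      refine Set.mem_iUnion.mpr ⟨k, ?_⟩
      have hMk : M k ω = μstar ω := by
        have hle : M k ω ≤ μstar ω := by
          rw [hμstar]
          exact Finset.sup'_le _ _ fun j _ => Finset.le_sup' (fun i => X i ω) (Finset.mem_univ j)
        have hge : μstar ω ≤ M k ω := by
          obtain ⟨j, hj, hjeq⟩ := Finset.exists_mem_eq_sup'
            (Finset.univ_nonempty_iff.mpr ⟨⟨0, Nat.pos_of_ne_zero hK⟩⟩) (fun j => X j ω)
          have hμeq : μstar ω = X j ω := by rw [hμstar]; exact hjeq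
          have hjk : j ≠ k := by
            intro h; rw [h] at hμeq; linarith
          calc μstar ω = X j ω := hμeq
            _ ≤ M k ω := Finset.le_sup' (fun i => X i ω) (Finset.mem_erase.mpr ⟨hjk, Finset.mem_univ j⟩)
        linarith
      refine ⟨by simpa [hMk] using lt_of_not_ge hξ, by simp only [hMk]; linarith,
        by simp only [hMk]; linarith⟩
  -- bound each A k
  have hbound : ∀ k, P (A k) ≤ ENNReal.ofReal (stdNormalPDF (ξ - Δ)) * ENNReal.ofReal Δ := by
    intro k
    have hpair : Measurable (fun ω => (M k ω, X k ω)) := (hMmeas k).prodMk (hmeas k)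
    have hmap : P.map (fun ω => (M k ω, X k ω)) = (P.map (M k)).prod (gaussianReal 0 1) := by
      rw [← hdist k]
      exact (indepFun_iff_map_prod_eq_prod_map_map (hMmeas k).aemeasurable
        (hmeas k).aemeasurable).mp (hind k)
    have hPA : P (A k) = ((P.map (M k)).prod (gaussianReal 0 1)) S := by
      rw [← hmap, Measure.map_apply hpair hSmeas]
    rw [hPA, Measure.prod_apply hSmeas]
    haveI : IsProbabilityMeasure (P.map (M k)) := Measure.isProbabilityMeasure_map (hMmeas k).aemeasurable
    calc ∫⁻ m, gaussianReal 0 1 (Prod.mk m ⁻¹' S) ∂(P.map (M k))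
        ≤ ∫⁻ _m, ENNReal.ofReal (stdNormalPDF (ξ - Δ)) * ENNReal.ofReal Δ ∂(P.map (M k)) := by
          refine lintegral_mono (fun m => ?_)
          by_cases hm : ξ < m
          · have hslice : Prod.mk m ⁻¹' S = Set.Ico (m - Δ) m := by
              ext x
              simp only [hS, Set.mem_preimage, Set.mem_setOf_eq, Set.mem_Ico]
              exact ⟨fun ⟨_, h2, h3⟩ => ⟨h2, h3⟩, fun ⟨h2, h3⟩ => ⟨hm, h2, h3⟩⟩
            rw [hslice]
            have := gauss_Ico_le (m - Δ) m (ξ - Δ) (by linarith) (by linarith)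
            calc gaussianReal 0 1 (Set.Ico (m - Δ) m)
                ≤ ENNReal.ofReal (stdNormalPDF (ξ - Δ)) * ENNReal.ofReal (m - (m - Δ)) := this
              _ = ENNReal.ofReal (stdNormalPDF (ξ - Δ)) * ENNReal.ofReal Δ := by ring_nf
          · have hslice : Prod.mk m ⁻¹' S = ∅ := by
              ext x
              simp only [hS, Set.mem_preimage, Set.mem_setOf_eq, Set.mem_empty_iff_false,
                iff_false]
              exact fun ⟨h1, _⟩ => hm h1
            rw [hslice]
            simp
      _ = ENNReal.ofReal (stdNormalPDF (ξ - Δ)) * ENNReal.ofReal Δ := by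
          rw [lintegral_const, measure_univ, mul_one]
  -- combine
  calc P {ω | ∃ k, 0 < μstar ω - X k ω ∧ μstar ω - X k ω ≤ Δ}
      ≤ P ((⋃ k, A k) ∪ {ω | μstar ω ≤ ξ}) := measure_mono hincl
    _ ≤ P (⋃ k, A k) + P {ω | μstar ω ≤ ξ} := measure_union_le _ _
    _ ≤ (∑ k, P (A k)) + P {ω | μstar ω ≤ ξ} := by
        gcongr
        exact measure_iUnion_fintype_le P A
    _ ≤ (∑ _k : Fin K, ENNReal.ofReal (stdNormalPDF (ξ - Δ)) * ENNReal.ofReal Δ)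
          + P {ω | μstar ω ≤ ξ} := by
        gcongr with k
        exact hbound k
    _ = ENNReal.ofReal (K * Δ * stdNormalPDF (ξ - Δ)) + P {ω | μstar ω ≤ ξ} := by
        congr 1
        rw [Finset.sum_const, Finset.card_univ, Fintype.card_fin]
        rw [← ENNReal.ofReal_mul (stdNormalPDF_nonneg _), nsmul_eq_mul,
          ← ENNReal.ofReal_natCast K, ← ENNReal.ofReal_mul (Nat.cast_nonneg K)]
        ring_nf
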